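/- Let d ≥ 2, let V = diag(1, −1, …, −1) be the diagonal d×d matrix with V₀₀ = 1 and V_ii = −1 for i ≥ 1, and let Φ_I(ρ) = ρ and Φ_V(ρ) = V ρ Vᴴ be the corresponding unitary channels on d×d complex matrices, Δ = Φ_I − Φ_V. Then ‖Δ‖_ME = 4·√(d−1)/d, whereas ‖Δ‖_⋄ = 2. In particular ‖Δ‖_ME → 0 as d → ∞ while the two channels remain perfectly distinguishable with an optimal (separable) input, since the supremum defining ‖Δ‖_⋄ equals 2 already at the rank-one density matrix σ = |+⟩⟨+| with |+⟩ = (|0⟩ + |1⟩)/√2. -/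

import Mathlib

open Matrix Kronecker ComplexOrder

noncomputable section

/-- The square root of a positive semidefinite matrix, as `Matrix.PosSemidef.sqrt` was
defined in the older Mathlib (removed since). -/
noncomputable def psdSqrtOld {n : Type*} [Fintype n] [DecidableEq n] {A : Matrix n n ℂ}
    (hA : A.PosSemidef) : Matrix n n ℂ :=
  hA.1.eigenvectorUnitary.1 * diagonal ((↑) ∘ Real.sqrt ∘ hA.1.eigenvalues) *
  (star hA.1.eigenvectorUnitary : Matrix n n ℂ)

/-- The matrix absolute value `|A| = √(AᴴA)`. -/
noncomputable def matAbs {n : Type*} [Fintype n] [DecidableEq n] (A : Matrix n n ℂ) :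
    Matrix n n ℂ :=
  psdSqrtOld (Matrix.posSemidef_conjTranspose_mul_self A)

/-- The trace norm `‖A‖₁ = Tr √(AᴴA)`. -/
noncomputable def traceNorm {n : Type*} [Fintype n] [DecidableEq n] (A : Matrix n n ℂ) : ℝ :=
  ((matAbs A).trace).re

/-- The positive semidefinite square root of a PSD matrix (zero otherwise). -/
noncomputable def matSqrt {n : Type*} [Fintype n] [DecidableEq n] (σ : Matrix n n ℂ) :
    Matrix n n ℂ :=
  open scoped Classical in
  if h : σ.PosSemidef then psdSqrtOld h else 0

/-- A density matrix: positive semidefinite with unit trace. -/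
def IsDensity {n : Type*} [Fintype n] [DecidableEq n] (σ : Matrix n n ℂ) : Prop :=
  σ.PosSemidef ∧ σ.trace = 1

/-- The Choi operator of a linear map between matrix algebras. -/
noncomputable def choi {d m : ℕ}
    (S : Matrix (Fin d) (Fin d) ℂ →ₗ[ℂ] Matrix (Fin m) (Fin m) ℂ) :
    Matrix (Fin m × Fin d) (Fin m × Fin d) ℂ :=
  ∑ i : Fin d, ∑ j : Fin d,
    (S (Matrix.single i j 1)) ⊗ₖ (Matrix.single i j 1)

/-- The ME-norm `‖S‖_ME = ‖J(S)‖₁ / d`. -/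
noncomputable def MENorm {d m : ℕ}
    (S : Matrix (Fin d) (Fin d) ℂ →ₗ[ℂ] Matrix (Fin m) (Fin m) ℂ) : ℝ :=
  traceNorm (choi S) / d

/-- The diamond norm: supremum over density matrices σ of
`‖(1 ⊗ √σ) J(S) (1 ⊗ √σ)‖₁`. -/
noncomputable def diamondNorm {d m : ℕ}
    (S : Matrix (Fin d) (Fin d) ℂ →ₗ[ℂ] Matrix (Fin m) (Fin m) ℂ) : ℝ :=
  ⨆ σ : {σ : Matrix (Fin d) (Fin d) ℂ // IsDensity σ},
    traceNorm (((1 : Matrix (Fin m) (Fin m) ℂ) ⊗ₖ matSqrt σ.1) * choi S *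
      ((1 : Matrix (Fin m) (Fin m) ℂ) ⊗ₖ matSqrt σ.1))

/-- The M-operator `M(S) = Tr_B |J(S)|`. -/
noncomputable def Mop {d m : ℕ}
    (S : Matrix (Fin d) (Fin d) ℂ →ₗ[ℂ] Matrix (Fin m) (Fin m) ℂ) :
    Matrix (Fin d) (Fin d) ℂ :=
  Matrix.of fun k l => ∑ b : Fin m, matAbs (choi S) (b, k) (b, l)

/-- A quantum channel: completely positive (PSD Choi operator, by Choi's theorem)
and trace preserving. -/
def IsQChannel {d m : ℕ}
    (S : Matrix (Fin d) (Fin d) ℂ →ₗ[ℂ] Matrix (Fin m) (Fin m) ℂ) : Prop :=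
  (choi S).PosSemidef ∧ ∀ ρ : Matrix (Fin d) (Fin d) ℂ, (S ρ).trace = ρ.trace

/-- A POVM with `n` outcomes on `ℂ^d`. -/
def IsPOVM {d n : ℕ} (M : Fin n → Matrix (Fin d) (Fin d) ℂ) : Prop :=
  (∀ i, (M i).PosSemidef) ∧ ∑ i, M i = 1

/-- The measurement channel of a family of POVM elements:
`Φ_M(ρ) = ∑ i, Tr(ρ M_i) |i⟩⟨i|`. -/
noncomputable def measChannel {d n : ℕ} (M : Fin n → Matrix (Fin d) (Fin d) ℂ) :
    Matrix (Fin d) (Fin d) ℂ →ₗ[ℂ] Matrix (Fin n) (Fin n) ℂ where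
  toFun ρ := ∑ i, (ρ * M i).trace • Matrix.single i i (1 : ℂ)
  map_add' ρ σ := by
    simp [add_mul, Matrix.trace_add, add_smul, Finset.sum_add_distrib]
  map_smul' c ρ := by
    simp [Matrix.smul_mul, Matrix.trace_smul, smul_smul, Finset.smul_sum]

/-- The symmetric Werner-Holevo channel `Φ₊(ρ) = (Tr(ρ)·1 + ρᵀ)/(d+1)`. -/
noncomputable def whPlus (d : ℕ) :
    Matrix (Fin d) (Fin d) ℂ →ₗ[ℂ] Matrix (Fin d) (Fin d) ℂ where
  toFun ρ := ((d : ℂ) + 1)⁻¹ • (ρ.trace • (1 : Matrix (Fin d) (Fin d) ℂ) + ρ.transpose)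
  map_add' ρ σ := by
    simp [Matrix.trace_add, Matrix.transpose_add, add_smul, smul_add]
    module
  map_smul' c ρ := by
    simp [Matrix.trace_smul, Matrix.transpose_smul, smul_smul, smul_add]
    module

/-- The antisymmetric Werner-Holevo channel `Φ₋(ρ) = (Tr(ρ)·1 − ρᵀ)/(d−1)`. -/
noncomputable def whMinus (d : ℕ) :
    Matrix (Fin d) (Fin d) ℂ →ₗ[ℂ] Matrix (Fin d) (Fin d) ℂ where
  toFun ρ := ((d : ℂ) - 1)⁻¹ • (ρ.trace • (1 : Matrix (Fin d) (Fin d) ℂ) - ρ.transpose)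
  map_add' ρ σ := by
    simp [Matrix.trace_add, Matrix.transpose_add, add_smul]
    module
  map_smul' c ρ := by
    simp [Matrix.trace_smul, Matrix.transpose_smul, smul_smul]
    module

/-- The unitary (conjugation) channel `Φ_U(ρ) = U ρ Uᴴ`. -/
noncomputable def conjChannel {d : ℕ} (U : Matrix (Fin d) (Fin d) ℂ) :
    Matrix (Fin d) (Fin d) ℂ →ₗ[ℂ] Matrix (Fin d) (Fin d) ℂ where
  toFun ρ := U * ρ * Uᴴ
  map_add' ρ σ := by simp [Matrix.mul_add, Matrix.add_mul]
  map_smul' c ρ := by simp [Matrix.mul_smul, Matrix.smul_mul]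


/-- The unitary `V = diag(1, −1, …, −1)`. -/
noncomputable def V19 (d : ℕ) : Matrix (Fin d) (Fin d) ℂ :=
  Matrix.diagonal fun i => if (i : ℕ) = 0 then 1 else -1

/-- The vector `|+⟩ = (|0⟩ + |1⟩)/√2` in `ℂ^d`. -/
noncomputable def plusVec (d : ℕ) : Fin d → ℂ :=
  fun i => if (i : ℕ) = 0 ∨ (i : ℕ) = 1 then (((Real.sqrt 2)⁻¹ : ℝ) : ℂ) else 0

/-!
The Choi operator of `Φ_U` is the rank-one operator `|vec Uᵀ⟩⟨vec Uᵀ|`. For a Hermitian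
involution `V`, the identity `xx* - yy* = (x + y)((x - y)/2)* + ((x - y)/2)(x + y)*` writes
`J(id - Φ_V)` as `|a⟩⟨b| + |b⟩⟨a|` with `a = vec (1 + Vᵀ)`, `b = vec ((1 - Vᵀ)/2)`. Conjugating
by `1 ⊗ S` turns `a, b` into `vec (S (1 + Vᵀ)), vec (S (1 - Vᵀ)/2)`, which stay orthogonal
because `(1 - Vᵀ)(1 + Vᵀ) = 0`, and an operator `|a⟩⟨b| + |b⟩⟨a|` with `a ⊥ b` has trace norm
`2‖a‖‖b‖`. For a density matrix `σ = S²` this gives `2 √(1 - (Tr σVᵀ)²) ≤ 2`, with equality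
when `Tr σVᵀ = 0`, as for `σ = |+⟩⟨+|`; for `S = 1` it gives `2 √(Tr (1 + V) Tr (1 - V))`,
which is `4 √(d - 1)` for `V = diag(1, -1, …, -1)`.
-/

section SquareRoot

open scoped MatrixOrder

variable {n : Type*} [Fintype n] [DecidableEq n]

lemma psdSqrtOld_eq_cfcSqrt {A : Matrix n n ℂ} (hA : A.PosSemidef) :
    psdSqrtOld hA = CFC.sqrt A := by
  rw [CFC.sqrt_eq_cfc, cfc_nnreal_eq_real _ A, hA.1.cfc_eq]
  simp only [IsHermitian.cfc, psdSqrtOld, Real.coe_sqrt, Real.coe_toNNReal',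
    Unitary.conjStarAlgAut_apply]
  congr 3
  funext i
  simp [hA.eigenvalues_nonneg i]

lemma matAbs_eq_of_mul_self_eq {A N : Matrix n n ℂ} (hN : N.PosSemidef) (h : N * N = Aᴴ * A) :
    matAbs A = N := by
  rw [matAbs, psdSqrtOld_eq_cfcSqrt]
  exact CFC.sqrt_unique h (nonneg_iff_posSemidef.mpr hN)

@[simp]
lemma traceNorm_zero : traceNorm (0 : Matrix n n ℂ) = 0 := by
  rw [traceNorm, matAbs_eq_of_mul_self_eq PosSemidef.zero (by simp)]
  simp

lemma isHermitian_matSqrt (σ : Matrix n n ℂ) : (matSqrt σ).IsHermitian := by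
  by_cases hσ : σ.PosSemidef
  · rw [matSqrt, dif_pos hσ, psdSqrtOld_eq_cfcSqrt]
    exact (nonneg_iff_posSemidef.mp (CFC.sqrt_nonneg σ)).isHermitian
  · rw [matSqrt, dif_neg hσ]
    exact isHermitian_zero

lemma matSqrt_mul_self {σ : Matrix n n ℂ} (hσ : σ.PosSemidef) : matSqrt σ * matSqrt σ = σ := by
  rw [matSqrt, dif_pos hσ, psdSqrtOld_eq_cfcSqrt]
  exact CFC.sqrt_mul_sqrt_self σ (nonneg_iff_posSemidef.mpr hσ)

end SquareRoot

section RankTwo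

variable {n : Type*} [Fintype n]

lemma exists_dotProduct_star_self_eq_sq {a : n → ℂ} (ha : a ≠ 0) :
    ∃ α : ℝ, 0 < α ∧ star a ⬝ᵥ a = ((α ^ 2 : ℝ) : ℂ) := by
  obtain ⟨hre, him⟩ := Complex.pos_iff.mp (dotProduct_star_self_pos_iff.mpr ha)
  refine ⟨√(star a ⬝ᵥ a).re, Real.sqrt_pos.mpr hre, ?_⟩
  rw [Real.sq_sqrt hre.le]
  exact Complex.ext rfl him.symm

lemma traceNorm_vecMulVec_add_vecMulVec [DecidableEq n] {a b : n → ℂ} (hab : star a ⬝ᵥ b = 0) :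
    traceNorm (vecMulVec a (star b) + vecMulVec b (star a)) =
      2 * √((star a ⬝ᵥ a).re * (star b ⬝ᵥ b).re) := by
  rcases eq_or_ne a 0 with rfl | ha
  · simp
  rcases eq_or_ne b 0 with rfl | hb
  · simp
  have hba : star b ⬝ᵥ a = 0 := by rw [star_dotProduct, hab, star_zero]
  obtain ⟨α, hα, haa⟩ := exists_dotProduct_star_self_eq_sq ha
  obtain ⟨β, hβ, hbb⟩ := exists_dotProduct_star_self_eq_sq hb
  -- `N` and `|a⟩⟨b| + |b⟩⟨a|` both square to `β² |a⟩⟨a| + α² |b⟩⟨b|`, so `N` is its absolute value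
  set N := ((β / α : ℝ) : ℂ) • vecMulVec a (star a) + ((α / β : ℝ) : ℂ) • vecMulVec b (star b)
  have hN : N.PosSemidef :=
    ((posSemidef_vecMulVec_self_star a).smul (by positivity)).add
      ((posSemidef_vecMulVec_self_star b).smul (by positivity))
  have hNN : N * N = (vecMulVec a (star b) + vecMulVec b (star a))ᴴ *
      (vecMulVec a (star b) + vecMulVec b (star a)) := by
    simp only [N, conjTranspose_add, conjTranspose_vecMulVec, star_star, add_mul, mul_add,
      smul_mul_smul_comm, vecMulVec_mul_vecMulVec, hab, hba, haa, hbb, zero_smul, vecMulVec_zero,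
      smul_zero, add_zero, zero_add, vecMulVec_smul, smul_smul]
    rw [add_comm]
    congr 2 <;> push_cast <;> field_simp
  rw [traceNorm, matAbs_eq_of_mul_self_eq hN hNN]
  simp only [N, trace_add, trace_smul, trace_vecMulVec, dotProduct_comm _ (star _), haa, hbb,
    smul_eq_mul, Complex.add_re, ← Complex.ofReal_mul, Complex.ofReal_re]
  rw [← mul_pow, Real.sqrt_sq (by positivity)]
  field_simp
  norm_num

end RankTwo

section Choi

variable {d m : ℕ}

lemma choi_apply (S : Matrix (Fin d) (Fin d) ℂ →ₗ[ℂ] Matrix (Fin m) (Fin m) ℂ)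
    (p q : Fin m × Fin d) : choi S p q = S (single p.2 q.2 1) p.1 q.1 := by
  simp [choi, Matrix.sum_apply, kroneckerMap_apply, single_apply, ite_and]

lemma choi_sub (S T : Matrix (Fin d) (Fin d) ℂ →ₗ[ℂ] Matrix (Fin m) (Fin m) ℂ) :
    choi (S - T) = choi S - choi T := by
  ext p q
  simp [choi_apply]

lemma conjChannel_one : conjChannel (1 : Matrix (Fin d) (Fin d) ℂ) = LinearMap.id := by
  ext ρ : 1
  simp [conjChannel]

lemma choi_conjChannel (U : Matrix (Fin d) (Fin d) ℂ) :
    choi (conjChannel U) = vecMulVec (vec Uᵀ) (star (vec Uᵀ)) := by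
  ext p q
  simp [choi_apply, conjChannel, vec, mul_apply, single_apply, vecMulVec_apply, ite_and]

end Choi

section Involution

variable {n : Type*} [Fintype n]

lemma vecMulVec_self_sub_vecMulVec_self (x y : n → ℂ) :
    vecMulVec x (star x) - vecMulVec y (star y) =
      vecMulVec (x + y) (star ((2⁻¹ : ℂ) • (x - y))) +
        vecMulVec ((2⁻¹ : ℂ) • (x - y)) (star (x + y)) := by
  ext i j
  simp [vecMulVec_apply]
  ring

lemma Matrix.IsHermitian.mul_vecMulVec_add_vecMulVec_mul {P : Matrix n n ℂ} (hP : P.IsHermitian)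
    (a b : n → ℂ) :
    P * (vecMulVec a (star b) + vecMulVec b (star a)) * P =
      vecMulVec (P *ᵥ a) (star (P *ᵥ b)) + vecMulVec (P *ᵥ b) (star (P *ᵥ a)) := by
  simp only [mul_add, add_mul, mul_vecMulVec, vecMulVec_mul, star_mulVec, hP.eq]

lemma star_vec_mul_dotProduct_vec_mul {S : Matrix n n ℂ} (hS : S.IsHermitian)
    (X Y : Matrix n n ℂ) : star (vec (S * X)) ⬝ᵥ vec (S * Y) = (S * S * (Y * Xᴴ)).trace := by
  rw [star_vec_dotProduct_vec, conjTranspose_mul, hS.eq, Matrix.mul_assoc, trace_mul_comm]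
  simp only [Matrix.mul_assoc]

variable [DecidableEq n] {W : Matrix n n ℂ} (hW : W.IsHermitian) (hWW : W * W = 1)
include hW hWW

lemma one_sub_mul_conjTranspose_one_add : (1 - W) * (1 + W)ᴴ = 0 := by
  rw [conjTranspose_add, conjTranspose_one, hW.eq]
  simp only [sub_mul, mul_add, one_mul, mul_one, hWW]
  abel

lemma one_add_mul_conjTranspose_one_add : (1 + W) * (1 + W)ᴴ = 2 • (1 + W) := by
  rw [conjTranspose_add, conjTranspose_one, hW.eq]
  simp only [add_mul, mul_add, one_mul, mul_one, hWW]
  abel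

lemma one_sub_mul_conjTranspose_one_sub : (1 - W) * (1 - W)ᴴ = 2 • (1 - W) := by
  rw [conjTranspose_sub, conjTranspose_one, hW.eq]
  simp only [sub_mul, mul_sub, one_mul, mul_one, hWW]
  abel

end Involution

section Reflection

variable {d : ℕ} {V : Matrix (Fin d) (Fin d) ℂ} (hV : V.IsHermitian) (hVV : V * V = 1)
include hV hVV

theorem traceNorm_conj_choi_id_sub_conjChannel {S : Matrix (Fin d) (Fin d) ℂ}
    (hS : S.IsHermitian) :
    traceNorm ((1 ⊗ₖ S) * choi (LinearMap.id - conjChannel V) * (1 ⊗ₖ S)) =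
      2 * √((S * S * (1 + Vᵀ)).trace.re * (S * S * (1 - Vᵀ)).trace.re) := by
  have hW : Vᵀ.IsHermitian := hV.transpose
  have hWW : Vᵀ * Vᵀ = 1 := by rw [← transpose_mul, hVV, transpose_one]
  have hP : (1 ⊗ₖ S : Matrix (Fin d × Fin d) (Fin d × Fin d) ℂ).IsHermitian := by
    rw [IsHermitian, conjTranspose_kronecker, conjTranspose_one, hS.eq]
  have hchoi : choi (LinearMap.id - conjChannel V) =
      vecMulVec (vec (1 + Vᵀ)) (star (vec ((2⁻¹ : ℂ) • (1 - Vᵀ)))) +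
        vecMulVec (vec ((2⁻¹ : ℂ) • (1 - Vᵀ))) (star (vec (1 + Vᵀ))) := by
    rw [choi_sub, ← conjChannel_one, choi_conjChannel, choi_conjChannel, transpose_one,
      vecMulVec_self_sub_vecMulVec_self, vec_smul, vec_add, vec_sub]
  rw [hchoi, hP.mul_vecMulVec_add_vecMulVec_mul, ← vec_mul_eq_mulVec, ← vec_mul_eq_mulVec,
    traceNorm_vecMulVec_add_vecMulVec]
  · rw [star_vec_mul_dotProduct_vec_mul hS, star_vec_mul_dotProduct_vec_mul hS,
      conjTranspose_smul, smul_mul_smul_comm, one_add_mul_conjTranspose_one_add hW hWW,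
      one_sub_mul_conjTranspose_one_sub hW hWW]
    simp only [mul_smul_comm, trace_smul]
    norm_num [Complex.mul_re]
    ring_nf
  · rw [star_vec_mul_dotProduct_vec_mul hS, smul_mul_assoc,
      one_sub_mul_conjTranspose_one_add hW hWW, smul_zero, mul_zero, trace_zero]

theorem traceNorm_choi_id_sub_conjChannel :
    traceNorm (choi (LinearMap.id - conjChannel V)) =
      2 * √((1 + V).trace.re * (1 - V).trace.re) := by
  simpa [trace_add, trace_sub] using
    traceNorm_conj_choi_id_sub_conjChannel hV hVV isHermitian_one

theorem traceNorm_conj_choi_id_sub_conjChannel_of_isDensity {σ : Matrix (Fin d) (Fin d) ℂ}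
    (hσ : IsDensity σ) :
    traceNorm ((1 ⊗ₖ matSqrt σ) * choi (LinearMap.id - conjChannel V) * (1 ⊗ₖ matSqrt σ)) =
      2 * √(1 - (σ * Vᵀ).trace.re ^ 2) := by
  rw [traceNorm_conj_choi_id_sub_conjChannel hV hVV (isHermitian_matSqrt σ),
    matSqrt_mul_self hσ.1, Matrix.mul_add, Matrix.mul_sub, Matrix.mul_one, trace_add, trace_sub,
    hσ.2]
  congr 2
  simp
  ring

theorem diamondNorm_id_sub_conjChannel {σ₀ : Matrix (Fin d) (Fin d) ℂ} (hσ₀ : IsDensity σ₀)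
    (h : (σ₀ * Vᵀ).trace.re = 0) :
    diamondNorm (LinearMap.id - conjChannel V) = 2 := by
  refine IsGreatest.csSup_eq ⟨⟨⟨σ₀, hσ₀⟩, ?_⟩, ?_⟩
  · simp [traceNorm_conj_choi_id_sub_conjChannel_of_isDensity hV hVV hσ₀, h]
  · rintro _ ⟨⟨σ, hσ⟩, rfl⟩
    dsimp only
    rw [traceNorm_conj_choi_id_sub_conjChannel_of_isDensity hV hVV hσ]
    have : √(1 - (σ * Vᵀ).trace.re ^ 2) ≤ 1 := Real.sqrt_le_one.mpr (by nlinarith)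
    linarith

end Reflection

section SignDiagonal

variable {d : ℕ}

lemma isHermitian_V19 : (V19 d).IsHermitian :=
  isHermitian_diagonal_of_self_adjoint _ <| by
    ext i
    simp only [Pi.star_apply]
    split_ifs <;> simp

lemma V19_mul_self : V19 d * V19 d = 1 := by
  rw [V19, diagonal_mul_diagonal, ← diagonal_one]
  congr 1
  ext i
  split_ifs <;> simp

lemma transpose_V19 : (V19 d)ᵀ = V19 d := diagonal_transpose _

lemma trace_V19 (hd : 1 ≤ d) : (V19 d).trace = 2 - d := by
  have h (k : ℕ) : (if k = 0 then (1 : ℂ) else -1) = -1 + if k = 0 then 2 else 0 := by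
    split_ifs <;> norm_num
  rw [V19, trace_diagonal, Fin.sum_univ_eq_sum_range (fun k => if k = 0 then (1 : ℂ) else -1)]
  simp only [h, Finset.sum_add_distrib, Finset.sum_ite_eq', Finset.mem_range]
  simp [if_pos (show 0 < d by omega)]
  ring

lemma plusVec_mul_star (i : Fin d) :
    plusVec d i * star (plusVec d i) = if (i : ℕ) = 0 ∨ (i : ℕ) = 1 then 2⁻¹ else 0 := by
  simp only [plusVec]
  split_ifs
  · simp [← Complex.ofReal_mul, ← mul_inv]
  · simp

lemma isDensity_vecMulVec_plusVec (hd : 2 ≤ d) :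
    IsDensity (vecMulVec (plusVec d) (star (plusVec d))) := by
  refine ⟨posSemidef_vecMulVec_self_star _, ?_⟩
  obtain ⟨e, rfl⟩ : ∃ e, d = e + 2 := ⟨d - 2, by omega⟩
  simp_rw [trace_vecMulVec, dotProduct, Pi.star_apply, plusVec_mul_star]
  rw [Fin.sum_univ_eq_sum_range (fun k => if k = 0 ∨ k = 1 then (2⁻¹ : ℂ) else 0)]
  norm_num [Finset.sum_range_succ']

lemma trace_vecMulVec_plusVec_mul_V19 (hd : 2 ≤ d) :
    (vecMulVec (plusVec d) (star (plusVec d)) * V19 d).trace = 0 := by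
  obtain ⟨e, rfl⟩ : ∃ e, d = e + 2 := ⟨d - 2, by omega⟩
  rw [vecMulVec_mul, trace_vecMulVec, dotProduct, V19]
  simp_rw [vecMul_diagonal, Pi.star_apply, ← mul_assoc, plusVec_mul_star]
  rw [Fin.sum_univ_eq_sum_range (fun k => (if k = 0 ∨ k = 1 then (2⁻¹ : ℂ) else 0) *
    if k = 0 then 1 else -1)]
  simp [Finset.sum_range_succ']

lemma traceNorm_choi_id_sub_conjChannel_V19 (hd : 1 ≤ d) :
    traceNorm (choi (LinearMap.id - conjChannel (V19 d))) = 4 * √((d : ℝ) - 1) := by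
  rw [traceNorm_choi_id_sub_conjChannel isHermitian_V19 V19_mul_self, trace_add, trace_sub,
    trace_one, trace_V19 hd, Fintype.card_fin]
  have h : ((d : ℂ) + (2 - d)).re * ((d : ℂ) - (2 - d)).re = 2 ^ 2 * ((d : ℝ) - 1) := by
    simp
    ring
  rw [h, Real.sqrt_mul (by positivity), Real.sqrt_sq zero_le_two]
  ring

end SignDiagonal

lemma tendsto_four_mul_sqrt_sub_one_div_atTop :
    Filter.Tendsto (fun n : ℕ => 4 * √((n : ℝ) - 1) / n) Filter.atTop (nhds 0) := by
  have hlim : Filter.Tendsto (fun n : ℕ => 4 / √(n : ℝ)) Filter.atTop (nhds 0) :=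
    tendsto_const_nhds.div_atTop (Real.tendsto_sqrt_atTop.comp tendsto_natCast_atTop_atTop)
  refine squeeze_zero (fun n => by positivity) (fun n => ?_) hlim
  calc 4 * √((n : ℝ) - 1) / n ≤ 4 * √(n : ℝ) / n := by gcongr; linarith
    _ = 4 / √(n : ℝ) := by rw [mul_div_assoc, Real.sqrt_div_self, div_eq_mul_inv]

/-- for the unitary channels of `I` and `V = diag(1,−1,…,−1)`
(`d ≥ 2`) with difference `Δ`, one has `‖Δ‖_ME = 4√(d−1)/d` while `‖Δ‖_⋄ = 2`;
the supremum defining `‖Δ‖_⋄` is already attained (with value 2) at the rank-one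
density matrix `σ = |+⟩⟨+|`, and `‖Δ‖_ME → 0` as `d → ∞`. -/
theorem stmt19 {d : ℕ} (hd : 2 ≤ d)
    (Delta : Matrix (Fin d) (Fin d) ℂ →ₗ[ℂ] Matrix (Fin d) (Fin d) ℂ)
    (hDelta : Delta = (LinearMap.id : Matrix (Fin d) (Fin d) ℂ →ₗ[ℂ] Matrix (Fin d) (Fin d) ℂ)
        - conjChannel (V19 d)) :
    MENorm Delta = 4 * Real.sqrt ((d : ℝ) - 1) / d
    ∧ diamondNorm Delta = 2
    ∧ IsDensity (Matrix.vecMulVec (plusVec d) (star (plusVec d)))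
    ∧ traceNorm (((1 : Matrix (Fin d) (Fin d) ℂ) ⊗ₖ
          matSqrt (Matrix.vecMulVec (plusVec d) (star (plusVec d)))) * choi Delta *
        ((1 : Matrix (Fin d) (Fin d) ℂ) ⊗ₖ
          matSqrt (Matrix.vecMulVec (plusVec d) (star (plusVec d))))) = 2
    ∧ Filter.Tendsto (fun n : ℕ => 4 * Real.sqrt ((n : ℝ) - 1) / n)
        Filter.atTop (nhds 0) := by
  subst hDelta
  have hplus := isDensity_vecMulVec_plusVec hd
  have hplus_V19 : (vecMulVec (plusVec d) (star (plusVec d)) * (V19 d)ᵀ).trace.re = 0 := by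
    rw [transpose_V19, trace_vecMulVec_plusVec_mul_V19 hd, Complex.zero_re]
  refine ⟨?_, diamondNorm_id_sub_conjChannel isHermitian_V19 V19_mul_self hplus hplus_V19, hplus,
    ?_, tendsto_four_mul_sqrt_sub_one_div_atTop⟩
  · rw [MENorm, traceNorm_choi_id_sub_conjChannel_V19 (by omega)]
  · rw [traceNorm_conj_choi_id_sub_conjChannel_of_isDensity isHermitian_V19 V19_mul_self hplus,
      hplus_V19]
    norm_num

end
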